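/- arXiv:2102.11717 — 5 statements merged into one kernel-verified Lean document; each statement's English description precedes it below -/
import Mathlib

section
/- The optimal state-action value function Q* is a fixed point of the Greedy Multi-Step Bellman Operator: for any finite set of policies Π̂ and any N ≥ 1, Q*(s₀,a₀) = E_{s₁}[ max_{π∈Π̂} max_{1≤n≤N} E_{τ∼π}[ Σ_{t=0}^{n-1} γ^t r(s_t,a_t) + γ^n max_{a'} Q*(s_n,a') ] ], where the trajectory starts from (s₀,a₀) with s₁ ∼ T(·|s₀,a₀) and subsequent actions drawn from π. -/
open Finset Filter Topology

/-- A transition kernel: for each state-action pair, a probability distribution over states. -/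
def IsKernel {S A : Type*} [Fintype S] (P : S × A → S → ℝ) : Prop :=
  ∀ p, (∀ s', 0 ≤ P p s') ∧ ∑ s', P p s' = 1

/-- A (stochastic) policy: for each state, a probability distribution over actions. -/
def IsPolicy {S A : Type*} [Fintype A] (π : S → A → ℝ) : Prop :=
  ∀ s, (∀ a, 0 ≤ π s a) ∧ ∑ a, π s a = 1

/-- Bellman optimality operator: (B Q)(s,a) = r(s,a) + γ ∑_{s'} P(s'|s,a) max_{a'} Q(s',a'). -/
noncomputable def bOpt {S A : Type*} [Fintype S] [Fintype A] [Nonempty A]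
    (P : S × A → S → ℝ) (r : S × A → ℝ) (γ : ℝ) (Q : S × A → ℝ) : S × A → ℝ :=
  fun p => r p + γ * ∑ s', P p s' * (univ.sup' univ_nonempty fun a' => Q (s', a'))

/-- Bellman expectation operator for policy π:
    (B^π Q)(s,a) = r(s,a) + γ ∑_{s'} P(s'|s,a) ∑_{a'} π(a'|s') Q(s',a'). -/
noncomputable def bExp {S A : Type*} [Fintype S] [Fintype A]
    (P : S × A → S → ℝ) (r : S × A → ℝ) (γ : ℝ) (π : S → A → ℝ) (Q : S × A → ℝ) :
    S × A → ℝ :=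
  fun p => r p + γ * ∑ s', P p s' * ∑ a', π s' a' * Q (s', a')

/-- Greedy Multi-Step Bellman Operator: G Q = max_{π ∈ Π̂} max_{1 ≤ n ≤ N} (B^π)^{n-1} B Q,
    componentwise, over a finite nonempty policy set indexed by ι. -/
noncomputable def gOp {S A : Type*} [Fintype S] [Fintype A] [Nonempty A]
    (P : S × A → S → ℝ) (r : S × A → ℝ) (γ : ℝ)
    {ι : Type*} [Fintype ι] [Nonempty ι] (pol : ι → S → A → ℝ)
    (N : ℕ) (hN : 1 ≤ N) (Q : S × A → ℝ) : S × A → ℝ :=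
  fun p => univ.sup' univ_nonempty fun i =>
    (Icc 1 N).sup' (nonempty_Icc.mpr hN) fun n =>
      ((bExp P r γ (pol i))^[n - 1] (bOpt P r γ Q)) p


lemma bExp_le_bOpt {S A : Type*} [Fintype S] [Fintype A] [Nonempty A]
    (P : S × A → S → ℝ) (r : S × A → ℝ) (γ : ℝ) (hγ0 : 0 < γ)
    (hP : IsKernel P) (π : S → A → ℝ) (hπ : IsPolicy π) (Q : S × A → ℝ) :
    ∀ p, bExp P r γ π Q p ≤ bOpt P r γ Q p := by
  intro p
  unfold bExp bOpt
  gcongr with s' _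
  · exact (hP p).1 s'
  · calc ∑ a', π s' a' * Q (s', a')
        ≤ ∑ a', π s' a' * (univ.sup' univ_nonempty fun a' => Q (s', a')) := by
          apply Finset.sum_le_sum
          intro a _
          exact mul_le_mul_of_nonneg_left (Finset.le_sup' (fun a' => Q (s', a')) (Finset.mem_univ a)) ((hπ s').1 a)
      _ = _ := by rw [← Finset.sum_mul, (hπ s').2, one_mul]

lemma bExp_mono {S A : Type*} [Fintype S] [Fintype A]
    (P : S × A → S → ℝ) (r : S × A → ℝ) (γ : ℝ) (hγ0 : 0 < γ)
    (hP : IsKernel P) (π : S → A → ℝ) (hπ : IsPolicy π)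
    {Q Q' : S × A → ℝ} (h : ∀ p, Q p ≤ Q' p) :
    ∀ p, bExp P r γ π Q p ≤ bExp P r γ π Q' p := by
  intro p
  unfold bExp
  gcongr with s' _ a _
  · exact (hP p).1 s'
  · exact (hπ s').1 a
  · exact h _

lemma bExp_iter_le {S A : Type*} [Fintype S] [Fintype A] [Nonempty A]
    (P : S × A → S → ℝ) (r : S × A → ℝ) (γ : ℝ) (hγ0 : 0 < γ)
    (hP : IsKernel P) (π : S → A → ℝ) (hπ : IsPolicy π)
    (Qstar : S × A → ℝ) (hQ : bOpt P r γ Qstar = Qstar) (k : ℕ) :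
    ∀ p, ((bExp P r γ π)^[k] Qstar) p ≤ Qstar p := by
  induction k with
  | zero => simp
  | succ k ih =>
    intro p
    rw [Function.iterate_succ_apply']
    calc bExp P r γ π ((bExp P r γ π)^[k] Qstar) p
        ≤ bExp P r γ π Qstar p := bExp_mono P r γ hγ0 hP π hπ ih p
      _ ≤ bOpt P r γ Qstar p := bExp_le_bOpt P r γ hγ0 hP π hπ Qstar p
      _ = Qstar p := by rw [hQ]

/-- Q* is a fixed point of the Greedy Multi-Step Bellman Operator. -/
theorem greedy_multistep_fixed_point
    {S A : Type*} [Fintype S] [Fintype A] [Nonempty S] [Nonempty A]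
    (P : S × A → S → ℝ) (r : S × A → ℝ) (γ : ℝ) (hγ0 : 0 < γ) (hγ1 : γ < 1)
    (hP : IsKernel P)
    {ι : Type*} [Fintype ι] [Nonempty ι]
    (pol : ι → S → A → ℝ) (hpol : ∀ i, IsPolicy (pol i))
    (N : ℕ) (hN : 1 ≤ N)
    (Qstar : S × A → ℝ) (hQ : bOpt P r γ Qstar = Qstar) :
    gOp P r γ pol N hN Qstar = Qstar := by
  funext p
  unfold gOp
  rw [hQ]
  apply le_antisymm
  · apply Finset.sup'_le
    intro i _
    apply Finset.sup'_le
    intro n _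
    exact bExp_iter_le P r γ hγ0 hP (pol i) (hpol i) Qstar hQ (n - 1) p
  · obtain ⟨i⟩ := (inferInstance : Nonempty ι)
    refine le_trans ?_ (Finset.le_sup' _ (Finset.mem_univ i))
    refine le_trans ?_ (Finset.le_sup' _ (Finset.mem_Icc.mpr ⟨le_refl 1, hN⟩))
    simp
end

section
/- The Greedy Multi-Step Bellman Operator G Q = max_{π∈Π̂} max_{1≤n≤N} (B^π)^{n-1} B Q is a γ-contraction in the sup norm: for all Q-functions q, q', ‖G q − G q'‖_∞ ≤ ‖B q − B q'‖_∞ ≤ γ ‖q − q'‖_∞. -/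
open Finset Filter Topology

lemma sup'_sub_le_of {α : Type*} (s : Finset α) (hs : s.Nonempty) (f g : α → ℝ) (C : ℝ)
    (h : ∀ a ∈ s, f a - g a ≤ C) : s.sup' hs f - s.sup' hs g ≤ C := by
  rw [sub_le_iff_le_add]
  apply Finset.sup'_le
  intro a ha
  have h1 := h a ha
  have h2 := Finset.le_sup' g ha
  linarith

lemma abs_sup'_sub_sup'_le {α : Type*} (s : Finset α) (hs : s.Nonempty) (f g : α → ℝ) (C : ℝ)
    (h : ∀ a ∈ s, |f a - g a| ≤ C) : |s.sup' hs f - s.sup' hs g| ≤ C := by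
  rw [abs_sub_le_iff]
  exact ⟨sup'_sub_le_of s hs f g C fun a ha => (abs_sub_le_iff.mp (h a ha)).1,
    sup'_sub_le_of s hs g f C fun a ha => (abs_sub_le_iff.mp (h a ha)).2⟩

lemma weighted_abs_le {α : Type*} [Fintype α] (w F G : α → ℝ) (C : ℝ) (hw : ∀ a, 0 ≤ w a)
    (hw1 : ∑ a, w a = 1) (h : ∀ a, |F a - G a| ≤ C) :
    |∑ a, w a * F a - ∑ a, w a * G a| ≤ C := by
  rw [← Finset.sum_sub_distrib]
  calc |∑ a, (w a * F a - w a * G a)| ≤ ∑ a, |w a * F a - w a * G a| :=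
        Finset.abs_sum_le_sum_abs _ _
    _ = ∑ a, w a * |F a - G a| := by
        refine Finset.sum_congr rfl fun a _ => ?_
        rw [← mul_sub, abs_mul, abs_of_nonneg (hw a)]
    _ ≤ ∑ a, w a * C := Finset.sum_le_sum fun a _ => mul_le_mul_of_nonneg_left (h a) (hw a)
    _ = C := by rw [← Finset.sum_mul, hw1, one_mul]

lemma bOpt_pointwise {S A : Type*} [Fintype S] [Fintype A] [Nonempty A]
    (P : S × A → S → ℝ) (r : S × A → ℝ) (γ : ℝ) (hγ0 : 0 ≤ γ) (hP : IsKernel P)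
    (Q Q' : S × A → ℝ) (C : ℝ) (h : ∀ p, |Q p - Q' p| ≤ C) (p : S × A) :
    |bOpt P r γ Q p - bOpt P r γ Q' p| ≤ γ * C := by
  unfold bOpt
  have : r p + γ * (∑ s', P p s' * (univ.sup' univ_nonempty fun a' => Q (s', a'))) -
      (r p + γ * (∑ s', P p s' * (univ.sup' univ_nonempty fun a' => Q' (s', a')))) =
      γ * ((∑ s', P p s' * (univ.sup' univ_nonempty fun a' => Q (s', a'))) -
        (∑ s', P p s' * (univ.sup' univ_nonempty fun a' => Q' (s', a')))) := by ring
  rw [this, abs_mul, abs_of_nonneg hγ0]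
  refine mul_le_mul_of_nonneg_left ?_ hγ0
  refine weighted_abs_le (P p) _ _ C (hP p).1 (hP p).2 fun s' => ?_
  exact abs_sup'_sub_sup'_le _ _ _ _ _ fun a' _ => h (s', a')

lemma bExp_pointwise {S A : Type*} [Fintype S] [Fintype A]
    (P : S × A → S → ℝ) (r : S × A → ℝ) (γ : ℝ) (hγ0 : 0 ≤ γ) (hγ1 : γ ≤ 1)
    (hP : IsKernel P) (π : S → A → ℝ) (hπ : IsPolicy π)
    (Q Q' : S × A → ℝ) (C : ℝ) (hC : 0 ≤ C) (h : ∀ p, |Q p - Q' p| ≤ C) (p : S × A) :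
    |bExp P r γ π Q p - bExp P r γ π Q' p| ≤ C := by
  unfold bExp
  have : r p + γ * (∑ s', P p s' * ∑ a', π s' a' * Q (s', a')) -
      (r p + γ * (∑ s', P p s' * ∑ a', π s' a' * Q' (s', a'))) =
      γ * ((∑ s', P p s' * ∑ a', π s' a' * Q (s', a')) -
        (∑ s', P p s' * ∑ a', π s' a' * Q' (s', a'))) := by ring
  rw [this, abs_mul, abs_of_nonneg hγ0]
  calc γ * |(∑ s', P p s' * ∑ a', π s' a' * Q (s', a')) -
        (∑ s', P p s' * ∑ a', π s' a' * Q' (s', a'))| ≤ 1 * C := by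
        refine mul_le_mul hγ1 ?_ (abs_nonneg _) zero_le_one
        refine weighted_abs_le (P p) _ _ C (hP p).1 (hP p).2 fun s' => ?_
        exact weighted_abs_le (π s') _ _ C (hπ s').1 (hπ s').2 fun a' => h (s', a')
    _ = C := one_mul C

lemma bExp_iter_pointwise {S A : Type*} [Fintype S] [Fintype A]
    (P : S × A → S → ℝ) (r : S × A → ℝ) (γ : ℝ) (hγ0 : 0 ≤ γ) (hγ1 : γ ≤ 1)
    (hP : IsKernel P) (π : S → A → ℝ) (hπ : IsPolicy π)
    (Q Q' : S × A → ℝ) (C : ℝ) (hC : 0 ≤ C) (h : ∀ p, |Q p - Q' p| ≤ C) (n : ℕ) (p : S × A) :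
    |(bExp P r γ π)^[n] Q p - (bExp P r γ π)^[n] Q' p| ≤ C := by
  induction n generalizing Q Q' with
  | zero => simpa using h p
  | succ n ih =>
    rw [Function.iterate_succ_apply, Function.iterate_succ_apply]
    exact ih _ _ fun p => bExp_pointwise P r γ hγ0 hγ1 hP π hπ Q Q' C hC h p

/-- the Greedy Multi-Step Operator is a γ-contraction in sup norm:
    ‖G q − G q'‖ ≤ ‖B q − B q'‖ ≤ γ ‖q − q'‖. -/
theorem greedy_multistep_contraction
    {S A : Type*} [Fintype S] [Fintype A] [Nonempty S] [Nonempty A]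
    (P : S × A → S → ℝ) (r : S × A → ℝ) (γ : ℝ) (hγ0 : 0 < γ) (hγ1 : γ < 1)
    (hP : IsKernel P)
    {ι : Type*} [Fintype ι] [Nonempty ι]
    (pol : ι → S → A → ℝ) (hpol : ∀ i, IsPolicy (pol i))
    (N : ℕ) (hN : 1 ≤ N) (q q' : S × A → ℝ) :
    ‖gOp P r γ pol N hN q - gOp P r γ pol N hN q'‖ ≤ ‖bOpt P r γ q - bOpt P r γ q'‖ ∧
      ‖bOpt P r γ q - bOpt P r γ q'‖ ≤ γ * ‖q - q'‖ := by
  have hq : ∀ p, |q p - q' p| ≤ ‖q - q'‖ := fun p => by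
    simpa using norm_le_pi_norm (q - q') p
  have hB : ∀ p, |bOpt P r γ q p - bOpt P r γ q' p| ≤ γ * ‖q - q'‖ :=
    bOpt_pointwise P r γ hγ0.le hP q q' _ hq
  have hBnorm : ‖bOpt P r γ q - bOpt P r γ q'‖ ≤ γ * ‖q - q'‖ := by
    refine pi_norm_le_iff_of_nonneg (by positivity) |>.mpr fun p => ?_
    simpa using hB p
  refine ⟨?_, hBnorm⟩
  have hBC : ∀ p, |bOpt P r γ q p - bOpt P r γ q' p| ≤ ‖bOpt P r γ q - bOpt P r γ q'‖ :=
    fun p => by simpa using norm_le_pi_norm (bOpt P r γ q - bOpt P r γ q') p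
  refine pi_norm_le_iff_of_nonneg (norm_nonneg _) |>.mpr fun p => ?_
  have : |gOp P r γ pol N hN q p - gOp P r γ pol N hN q' p| ≤
      ‖bOpt P r γ q - bOpt P r γ q'‖ := by
    unfold gOp
    refine abs_sup'_sub_sup'_le _ _ _ _ _ fun i _ => ?_
    refine abs_sup'_sub_sup'_le _ _ _ _ _ fun n _ => ?_
    exact bExp_iter_pointwise P r γ hγ0.le hγ1.le hP (pol i) (hpol i) _ _ _
      (norm_nonneg _) hBC (n - 1) p
  simpa using this
end

section
/- The Greedy Multi-Step Operator contracts to Q* at least as fast as the one-step Bellman optimality operator: for any Q-function q, ‖G q − Q*‖_∞ ≤ ‖B q − Q*‖_∞. -/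
open Finset Filter Topology

/-- the Greedy Multi-Step Operator contracts to Q* at least as fast as
    the one-step Bellman optimality operator: ‖G q − Q*‖ ≤ ‖B q − Q*‖. -/
theorem greedy_multistep_faster_than_one_step
    {S A : Type*} [Fintype S] [Fintype A] [Nonempty S] [Nonempty A]
    (P : S × A → S → ℝ) (r : S × A → ℝ) (γ : ℝ) (hγ0 : 0 < γ) (hγ1 : γ < 1)
    (hP : IsKernel P)
    {ι : Type*} [Fintype ι] [Nonempty ι]
    (pol : ι → S → A → ℝ) (hpol : ∀ i, IsPolicy (pol i))
    (N : ℕ) (hN : 1 ≤ N)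
    (Qstar : S × A → ℝ) (hQ : bOpt P r γ Qstar = Qstar)
    (q : S × A → ℝ) :
    ‖gOp P r γ pol N hN q - Qstar‖ ≤ ‖bOpt P r γ q - Qstar‖ := by
  set c := ‖bOpt P r γ q - Qstar‖ with hc
  have hc0 : 0 ≤ c := norm_nonneg _
  have hpt : ∀ p, |bOpt P r γ q p - Qstar p| ≤ c := by
    intro p
    simpa [Real.norm_eq_abs] using norm_le_pi_norm (bOpt P r γ q - Qstar) p
  -- bExp of Qstar is at most Qstar
  have hexp_star : ∀ i p, bExp P r γ (pol i) Qstar p ≤ Qstar p := by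
    intro i p
    have h1 : bExp P r γ (pol i) Qstar p ≤ bOpt P r γ Qstar p := by
      unfold bExp bOpt
      gcongr with s' _
      · exact (hP p).1 s'
      · calc ∑ a', pol i s' a' * Qstar (s', a')
            ≤ ∑ a', pol i s' a' * (univ.sup' univ_nonempty fun a' => Qstar (s', a')) := by
              refine Finset.sum_le_sum fun a' _ => ?_
              exact mul_le_mul_of_nonneg_left
                (Finset.le_sup' (fun a' => Qstar (s', a')) (mem_univ a')) ((hpol i s').1 a')
        _ = univ.sup' univ_nonempty fun a' => Qstar (s', a') := by
              rw [← Finset.sum_mul, (hpol i s').2, one_mul]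
    simpa [hQ] using h1
  -- key induction
  have key : ∀ i k p, ((bExp P r γ (pol i))^[k] (bOpt P r γ q)) p ≤ Qstar p + c := by
    intro i k
    induction k with
    | zero =>
      intro p
      simpa using sub_le_iff_le_add'.mp ((abs_le.mp (hpt p)).2)
    | succ k ih =>
      intro p
      rw [Function.iterate_succ_apply']
      set X := (bExp P r γ (pol i))^[k] (bOpt P r γ q) with hX
      have step1 : bExp P r γ (pol i) X p ≤ bExp P r γ (pol i) (fun p => Qstar p + c) p := by
        unfold bExp
        gcongr with s' _ a' _
        · exact (hP p).1 s'
        · exact (hpol i s').1 a'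
        · exact ih _
      have step2 : bExp P r γ (pol i) (fun p => Qstar p + c) p
          = bExp P r γ (pol i) Qstar p + γ * c := by
        unfold bExp
        have hinner : ∀ s', ∑ a', pol i s' a' * (Qstar (s', a') + c)
            = (∑ a', pol i s' a' * Qstar (s', a')) + c := by
          intro s'
          simp only [mul_add, Finset.sum_add_distrib, ← Finset.sum_mul, (hpol i s').2, one_mul]
        simp only [hinner]
        have houter : ∑ s', P p s' * ((∑ a', pol i s' a' * Qstar (s', a')) + c)
            = (∑ s', P p s' * ∑ a', pol i s' a' * Qstar (s', a')) + c := by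
          simp only [mul_add, Finset.sum_add_distrib, ← Finset.sum_mul, (hP p).2, one_mul]
        rw [houter]
        ring
      calc bExp P r γ (pol i) X p ≤ bExp P r γ (pol i) Qstar p + γ * c := by
            rw [← step2]; exact step1
        _ ≤ Qstar p + γ * c := by linarith [hexp_star i p]
        _ ≤ Qstar p + c := by nlinarith
  rw [hc]
  refine (pi_norm_le_iff_of_nonneg hc0).mpr fun p => ?_
  rw [Pi.sub_apply, Real.norm_eq_abs, abs_le]
  simp only [gOp]
  constructor
  · -- lower bound: gOp p ≥ bOpt q p ≥ Qstar p - c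
    have h1 : bOpt P r γ q p ≤ univ.sup' univ_nonempty (fun i => (Icc 1 N).sup' (nonempty_Icc.mpr hN)
        (fun n => ((bExp P r γ (pol i))^[n - 1] (bOpt P r γ q)) p)) := by
      have i0 : ι := Classical.arbitrary ι
      have hmem : 1 ∈ Icc 1 N := by simp [hN]
      calc bOpt P r γ q p
          = ((bExp P r γ (pol i0))^[1 - 1] (bOpt P r γ q)) p := by simp
        _ ≤ (Icc 1 N).sup' (nonempty_Icc.mpr hN)
              (fun n => ((bExp P r γ (pol i0))^[n - 1] (bOpt P r γ q)) p) :=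
            Finset.le_sup' (fun n => ((bExp P r γ (pol i0))^[n - 1] (bOpt P r γ q)) p) hmem
        _ ≤ _ := Finset.le_sup' (fun i => (Icc 1 N).sup' (nonempty_Icc.mpr hN)
              (fun n => ((bExp P r γ (pol i))^[n - 1] (bOpt P r γ q)) p)) (mem_univ i0)
    have := (abs_le.mp (hpt p)).1
    linarith
  · -- upper bound
    have h2 : univ.sup' univ_nonempty (fun i => (Icc 1 N).sup' (nonempty_Icc.mpr hN)
        (fun n => ((bExp P r γ (pol i))^[n - 1] (bOpt P r γ q)) p)) ≤ Qstar p + c := by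
      refine Finset.sup'_le _ _ fun i _ => Finset.sup'_le _ _ fun n _ => key i (n-1) p
    linarith
end

section
/- In a deterministic MDP, the greedy multi-step return satisfies the recursion max_{1≤n≤T−t} R_n^Q(τ_{s_t,a_t}) = r_t + γ max{ max_{a'} Q(s_{t+1}, a'), max_{1≤n≤T−(t+1)} R_n^Q(τ_{s_{t+1},a_{t+1}}) }, where R_n^Q(τ_{s_t,a_t}) = Σ_{i=0}^{n-1} γ^i r_{t+i} + γ^n max_{a'} Q(s_{t+n}, a') and T−t ≥ 2. -/
open Finset Filter Topology

/-- backward recursion for the greedy multi-step return along a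
    deterministic trajectory:
    max_{1≤n≤T−t} R_n^Q(τ_{s_t,a_t})
      = r_t + γ·max( max_{a'} Q(s_{t+1},a'), max_{1≤n≤T−(t+1)} R_n^Q(τ_{s_{t+1},a_{t+1}}) ),
    where R_n^Q = Σ_{i=0}^{n-1} γ^i r_{t+i} + γ^n max_{a'} Q(s_{t+n},a'). -/
theorem greedy_return_backward_recursion
    {S A : Type*} [Fintype A] [Nonempty A]
    (γ : ℝ) (hγ0 : 0 < γ) (hγ1 : γ < 1)
    (T t : ℕ) (hT : t + 2 ≤ T)
    (s : ℕ → S) (rr : ℕ → ℝ) (Q : S × A → ℝ) :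
    (Icc 1 (T - t)).sup' (nonempty_Icc.mpr (by omega))
        (fun n => (∑ i ∈ range n, γ ^ i * rr (t + i)) +
          γ ^ n * (univ.sup' univ_nonempty fun a' => Q (s (t + n), a'))) =
      rr t + γ * max
        (univ.sup' univ_nonempty fun a' => Q (s (t + 1), a'))
        ((Icc 1 (T - (t + 1))).sup' (nonempty_Icc.mpr (by omega))
          (fun n => (∑ i ∈ range n, γ ^ i * rr (t + 1 + i)) +
            γ ^ n * (univ.sup' univ_nonempty fun a' => Q (s (t + 1 + n), a')))) := by
  have key : Icc 1 (T - t) = insert 1 ((Icc 1 (T - (t+1))).image (· + 1)) := by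
    ext n
    simp only [Finset.mem_insert, Finset.mem_image, Finset.mem_Icc]
    constructor
    · rintro ⟨h1, h2⟩
      rcases Nat.eq_or_lt_of_le h1 with h | h
      · exact Or.inl h.symm
      · exact Or.inr ⟨n - 1, ⟨by omega, by omega⟩, by omega⟩
    · rintro (rfl | ⟨m, ⟨hm1, hm2⟩, rfl⟩) <;> omega
  simp only [key]
  rw [Finset.sup'_insert, Finset.sup'_image]
  simp only [Function.comp_def]
  have h2 : ∀ m ∈ Icc 1 (T - (t+1)),
      (∑ i ∈ range (m + 1), γ ^ i * rr (t + i)) +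
          γ ^ (m + 1) * (univ.sup' univ_nonempty fun a' => Q (s (t + (m + 1)), a'))
        = rr t + γ * ((∑ i ∈ range m, γ ^ i * rr (t + 1 + i)) +
          γ ^ m * (univ.sup' univ_nonempty fun a' => Q (s (t + 1 + m), a'))) := by
    intro m _
    rw [Finset.sum_range_succ', show t + (m + 1) = t + 1 + m from by omega]
    have h3 : ∀ i, γ ^ (i + 1) * rr (t + (i + 1)) = γ * (γ ^ i * rr (t + 1 + i)) := fun i => by
      rw [show t + (i + 1) = t + 1 + i from by omega]; ring
    simp only [h3, pow_zero, one_mul, Nat.add_zero]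
    rw [← Finset.mul_sum, pow_succ]
    ring
  rw [Finset.sup'_congr _ rfl h2]
  have h1 : (∑ i ∈ range 1, γ ^ i * rr (t + i)) +
      γ ^ 1 * (univ.sup' univ_nonempty fun a' => Q (s (t + 1), a'))
      = rr t + γ * (univ.sup' univ_nonempty fun a' => Q (s (t + 1), a')) := by
    simp
  rw [h1]
  have hc := Finset.comp_sup'_eq_sup'_comp (s := Icc 1 (T - (t+1)))
    (nonempty_Icc.mpr (by omega)) (g := fun x => rr t + γ * x)
    (f := fun m => (∑ i ∈ range m, γ ^ i * rr (t + 1 + i)) +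
      γ ^ m * (univ.sup' univ_nonempty fun a' => Q (s (t + 1 + m), a')))
    (by intro x y; rw [mul_max_of_nonneg _ _ hγ0.le]; exact (max_add_add_left _ _ _).symm)
  simp only [Function.comp_def] at hc
  rw [← hc, mul_max_of_nonneg _ _ hγ0.le, ← max_add_add_left]
  all_goals exact (nonempty_Icc.mpr (by omega)).image _
end

section
/- The Greedy Multi-Step Operator dominates the one-step Bellman optimality operator: G q ≥ B q componentwise for every Q-function q, and if additionally B q ≥ q (q is 'pessimistic-improving'), then for each 1 ≤ n ≤ N such that Π̂ contains a policy greedy with respect to B^{k} q for every k < n, we have G q ≥ B^n q. -/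
open Finset Filter Topology

lemma bExp_iter_mono {S A : Type*} [Fintype S] [Fintype A]
    (P : S × A → S → ℝ) (r : S × A → ℝ) (γ : ℝ) (hγ0 : 0 < γ)
    (hP : IsKernel P) (π : S → A → ℝ) (hπ : IsPolicy π)
    {Q Q' : S × A → ℝ} (h : ∀ p, Q p ≤ Q' p) (m : ℕ) :
    ∀ p, (bExp P r γ π)^[m] Q p ≤ (bExp P r γ π)^[m] Q' p := by
  induction m with
  | zero => exact h
  | succ m ih =>
    rw [Function.iterate_succ_apply', Function.iterate_succ_apply']
    exact bExp_mono P r γ hγ0 hP π hπ ih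

/-- the Greedy Multi-Step Operator dominates the one-step Bellman
    optimality operator: G q ≥ B q componentwise; moreover, if B q ≥ q and Π̂ contains a
    policy that is greedy with respect to each iterate B^k q (k < n), then G q ≥ B^n q
    for 1 ≤ n ≤ N. -/
theorem greedy_multistep_dominates_bellman
    {S A : Type*} [Fintype S] [Fintype A] [Nonempty S] [Nonempty A]
    (P : S × A → S → ℝ) (r : S × A → ℝ) (γ : ℝ) (hγ0 : 0 < γ) (hγ1 : γ < 1)
    (hP : IsKernel P)
    {ι : Type*} [Fintype ι] [Nonempty ι]
    (pol : ι → S → A → ℝ) (hpol : ∀ i, IsPolicy (pol i))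
    (N : ℕ) (hN : 1 ≤ N) (q : S × A → ℝ) :
    (∀ p, bOpt P r γ q p ≤ gOp P r γ pol N hN q p) ∧
      (∀ n : ℕ, 1 ≤ n → n ≤ N →
        (∀ p, q p ≤ bOpt P r γ q p) →
        (∃ i, ∀ k < n,
          bExp P r γ (pol i) ((bOpt P r γ)^[k] q) = bOpt P r γ ((bOpt P r γ)^[k] q)) →
        ∀ p, ((bOpt P r γ)^[n] q) p ≤ gOp P r γ pol N hN q p) := by
  have key : ∀ (i : ι) (n : ℕ), 1 ≤ n → n ≤ N →
      ∀ p, ((bExp P r γ (pol i))^[n-1] (bOpt P r γ q)) p ≤ gOp P r γ pol N hN q p := by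
    intro i n h1 h2 p
    have hi : i ∈ (univ : Finset ι) := mem_univ i
    have hn : n ∈ Icc 1 N := mem_Icc.mpr ⟨h1, h2⟩
    unfold gOp
    exact le_trans (le_sup' (fun m => ((bExp P r γ (pol i))^[m - 1] (bOpt P r γ q)) p) hn)
      (le_sup' (fun j => (Icc 1 N).sup' (nonempty_Icc.mpr hN) fun m =>
        ((bExp P r γ (pol j))^[m - 1] (bOpt P r γ q)) p) hi)
  constructor
  · intro p
    have := key (Classical.arbitrary ι) 1 le_rfl hN p
    simpa using this
  · rintro n h1 h2 hq ⟨i, hgreedy⟩ p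
    have main : ∀ m : ℕ, 1 ≤ m → m ≤ n →
        ∀ p, ((bOpt P r γ)^[m] q) p ≤ ((bExp P r γ (pol i))^[m-1] (bOpt P r γ q)) p := by
      intro m
      induction m with
      | zero => omega
      | succ m ih =>
        intro _ hmn p'
        rcases Nat.eq_zero_or_pos m with hm | hm
        · subst hm; simp
        · have hmn' : m ≤ n := le_of_lt hmn
          have step := ih hm hmn'
          have hm1 : m < n := hmn
          have hgr := hgreedy m hm1
          rw [Function.iterate_succ_apply', ← hgr]
          have : ∀ p'', bExp P r γ (pol i) ((bOpt P r γ)^[m] q) p'' ≤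
              bExp P r γ (pol i) ((bExp P r γ (pol i))^[m-1] (bOpt P r γ q)) p'' :=
            bExp_mono P r γ hγ0 hP (pol i) (hpol i) step
          refine (this p').trans ?_
          have heq : (bExp P r γ (pol i))^[m+1-1] (bOpt P r γ q) p' =
              bExp P r γ (pol i) ((bExp P r γ (pol i))^[m-1] (bOpt P r γ q)) p' := by
            have h' : m + 1 - 1 = (m-1)+1 := by omega
            rw [h', Function.iterate_succ_apply']
          rw [heq]
    exact (main n h1 le_rfl p).trans (key i n h1 h2 p)
end
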